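/- arXiv:1603.05243 — 4 statements merged into one kernel-verified Lean document; each statement's English description precedes it below -/
import Mathlib

section
/- For every n ≥ 2, every simple graph G on at least 2^(2n-3) vertices contains either a clique of size n or an independent set of size n; i.e., the Ramsey number R(n) satisfies R(n) ≤ 2^(2n-3). -/
/-!
Erdős–Szekeres: a vertex set `A` with `C(s + t, s) ≤ |A|` contains an `(s + 1)`-clique or an
independent `(t + 1)`-set. Pick `a ∈ A`; its neighbours and non-neighbours in `A` together number
`|A| - 1`, and by Pascal's rule `C(s + t, s) = C(s + t - 1, s - 1) + C(s + t - 1, s)`, so one of the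
two sets is large enough for the induction hypothesis, and `a` extends a clique found among its
neighbours or an independent set found among its non-neighbours. For `s = t = n - 1` it remains
to note `C(2m, m) = 2 C(2m - 1, m - 1) ≤ 2 ^ (2m - 1)`.
-/

open Finset

theorem Nat.centralBinom_le_two_pow (m : ℕ) : m.centralBinom ≤ 2 ^ (2 * m - 1) := by
  rw [Nat.centralBinom_eq_two_mul_choose]
  obtain _ | m := m
  · simp
  calc (2 * (m + 1)).choose (m + 1)
      = (2 * m + 1).choose m + (2 * m + 1).choose (m + 1) := Nat.choose_succ_succ' _ _
    _ = 2 * (2 * m + 1).choose m := by rw [Nat.choose_symm_half]; ring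
    _ ≤ 2 * 4 ^ m := Nat.mul_le_mul_left 2 (Nat.choose_middle_le_pow m)
    _ = 2 ^ (2 * (m + 1) - 1) := by
      rw [show 2 * (m + 1) - 1 = 2 * m + 1 by omega, pow_succ, pow_mul, mul_comm]; norm_num

namespace SimpleGraph

variable {V : Type*}

theorem card_filter_adj_add_card_filter_compl_adj [DecidableEq V] (G : SimpleGraph V)
    [DecidableRel G.Adj] [DecidableRel Gᶜ.Adj] {A : Finset V} {a : V} (ha : a ∈ A) :
    #{b ∈ A | G.Adj a b} + #{b ∈ A | Gᶜ.Adj a b} + 1 = #A := by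
  have hG : {b ∈ A | G.Adj a b} = {b ∈ A.erase a | G.Adj a b} := by
    ext b
    simp only [mem_filter, mem_erase]
    exact ⟨fun ⟨hb, hab⟩ => ⟨⟨hab.ne.symm, hb⟩, hab⟩, fun ⟨⟨_, hb⟩, hab⟩ => ⟨hb, hab⟩⟩
  have hGc : {b ∈ A | Gᶜ.Adj a b} = {b ∈ A.erase a | ¬G.Adj a b} := by
    ext b
    simp only [mem_filter, mem_erase, compl_adj]
    exact ⟨fun ⟨hb, hab, hnab⟩ => ⟨⟨Ne.symm hab, hb⟩, hnab⟩,
      fun ⟨⟨hba, hb⟩, hnab⟩ => ⟨hb, Ne.symm hba, hnab⟩⟩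
  rw [hG, hGc, card_filter_add_card_filter_not, card_erase_add_one ha]

theorem exists_isNClique_or_compl_isNClique_of_choose_le (G : SimpleGraph V) (A : Finset V)
    (s t : ℕ) (hA : (s + t).choose s ≤ #A) :
    ∃ B ⊆ A, G.IsNClique (s + 1) B ∨ Gᶜ.IsNClique (t + 1) B := by
  classical
  obtain ⟨a, ha⟩ : A.Nonempty := card_pos.1 ((Nat.choose_pos (by omega)).trans_le hA)
  match s, t with
  | 0, _ => exact ⟨{a}, by simpa, Or.inl (isNClique_singleton.2 rfl)⟩
  | _, 0 => exact ⟨{a}, by simpa, Or.inr (isNClique_singleton.2 rfl)⟩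
  | s + 1, t + 1 =>
    have hpascal : (s + 1 + (t + 1)).choose (s + 1)
        = (s + (t + 1)).choose s + (t + (s + 1)).choose t := by
      rw [show s + 1 + (t + 1) = s + (t + 1) + 1 by omega, Nat.choose_succ_succ',
        show s + (t + 1) = t + (s + 1) by omega, ← Nat.choose_symm_add]
    have hsplit := G.card_filter_adj_add_card_filter_compl_adj ha
    obtain hN | hM : (s + (t + 1)).choose s ≤ #{b ∈ A | G.Adj a b} ∨
        (t + (s + 1)).choose t ≤ #{b ∈ A | Gᶜ.Adj a b} := by omega
    · obtain ⟨B, hBN, hB | hB⟩ := G.exists_isNClique_or_compl_isNClique_of_choose_le _ s (t + 1) hN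
      · exact ⟨insert a B, insert_subset ha (hBN.trans (filter_subset _ _)),
          Or.inl (hB.insert fun b hb => (mem_filter.1 (hBN hb)).2)⟩
      · exact ⟨B, hBN.trans (filter_subset _ _), Or.inr hB⟩
    -- the non-neighbour case is the neighbour case for `Gᶜ`, with `s` and `t` swapped
    · obtain ⟨B, hBM, hB | hB⟩ :=
        Gᶜ.exists_isNClique_or_compl_isNClique_of_choose_le _ t (s + 1) hM
      · exact ⟨insert a B, insert_subset ha (hBM.trans (filter_subset _ _)),
          Or.inr (hB.insert fun b hb => (mem_filter.1 (hBM hb)).2)⟩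
      · rw [compl_compl] at hB
        exact ⟨B, hBM.trans (filter_subset _ _), Or.inl hB⟩
termination_by s + t

end SimpleGraph

theorem ramsey_le_two_pow_general (n : ℕ) (N : ℕ) (hN : 2 ^ (2 * n - 3) ≤ N)
    (G : SimpleGraph (Fin N)) :
    ∃ s : Finset (Fin N), s.card = n ∧ (G.IsClique (s : Set (Fin N)) ∨ Gᶜ.IsClique (s : Set (Fin N))) := by
  obtain _ | m := n
  · exact ⟨∅, rfl, Or.inl (by simp)⟩
  have hchoose : (m + m).choose m ≤ #(univ : Finset (Fin N)) :=
    calc (m + m).choose m = m.centralBinom := by rw [Nat.centralBinom_eq_two_mul_choose, two_mul]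
      _ ≤ 2 ^ (2 * m - 1) := Nat.centralBinom_le_two_pow m
      _ = 2 ^ (2 * (m + 1) - 3) := by rw [show 2 * (m + 1) - 3 = 2 * m - 1 by omega]
      _ ≤ N := hN
      _ = #univ := (card_fin N).symm
  obtain ⟨B, -, hB | hB⟩ := G.exists_isNClique_or_compl_isNClique_of_choose_le univ m m hchoose
  exacts [⟨B, hB.card_eq, Or.inl hB.isClique⟩, ⟨B, hB.card_eq, Or.inr hB.isClique⟩]

/-- Ramsey bound `R(n) ≤ 2^(2n-3)`: every graph on at least `2^(2n-3)` vertices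
(for `n ≥ 2`) contains a clique of size `n` or an independent set of size `n`. -/
theorem ramsey_le_two_pow (n : ℕ) (hn : 2 ≤ n) (N : ℕ) (hN : 2 ^ (2 * n - 3) ≤ N)
    (G : SimpleGraph (Fin N)) :
    ∃ s : Finset (Fin N), s.card = n ∧ (G.IsClique (s : Set (Fin N)) ∨ Gᶜ.IsClique (s : Set (Fin N))) :=
  ramsey_le_two_pow_general n N hN G
end

section
/- Every simple graph G on 2^(n-2) vertices (for n ≥ 2) contains a clique A and an independent set B (not necessarily disjoint) with |A| + |B| ≥ n. -/
/-!
Erdős–Szekeres style induction: pick a vertex `v`. Among the other `≥ 2^(k+1) - 1` vertices,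
either the neighbours or the non-neighbours of `v` number at least `2^k`; a clique/independent
pair of total size `k + 2` found there extends by `v` (on the clique side for neighbours, on the
independent side for non-neighbours). Since the notion is symmetric under `G ↦ Gᶜ`, only the
neighbour case needs to be argued.
-/

open Finset

namespace SimpleGraph

variable {V : Type*}

/-- `G.CliqueIndepAtLeast S k` says `ρ'(G[S]) ≥ k`. -/
def CliqueIndepAtLeast (G : SimpleGraph V) (S : Finset V) (k : ℕ) : Prop :=
  ∃ A ⊆ S, ∃ B ⊆ S, G.IsClique (A : Set V) ∧ Gᶜ.IsClique (B : Set V) ∧ k ≤ #A + #B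

namespace CliqueIndepAtLeast

variable {G : SimpleGraph V} {S T : Finset V} {k : ℕ}

theorem compl (h : G.CliqueIndepAtLeast S k) : Gᶜ.CliqueIndepAtLeast S k := by
  obtain ⟨A, hAS, B, hBS, hA, hB, hk⟩ := h
  exact ⟨B, hBS, A, hAS, hB, by rwa [compl_compl], by omega⟩

theorem two_of_mem {v : V} (hv : v ∈ S) : G.CliqueIndepAtLeast S 2 :=
  ⟨{v}, by simpa using hv, {v}, by simpa using hv, by simp, by simp, by simp⟩

theorem insert_of_forall_adj [DecidableEq V] {v : V} (hv : v ∈ S) (hTS : T ⊆ S)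
    (hadj : ∀ u ∈ T, G.Adj v u) (h : G.CliqueIndepAtLeast T k) :
    G.CliqueIndepAtLeast S (k + 1) := by
  obtain ⟨A, hAT, B, hBT, hA, hB, hk⟩ := h
  have hvA : v ∉ A := fun hvA => G.irrefl (hadj v (hAT hvA))
  refine ⟨insert v A, insert_subset hv (hAT.trans hTS), B, hBT.trans hTS, ?_, hB, ?_⟩
  · rw [coe_insert]
    exact hA.insert fun u hu _ => hadj u (hAT hu)
  · rw [card_insert_of_notMem hvA]
    omega

end CliqueIndepAtLeast

theorem cliqueIndepAtLeast_of_two_pow_le_card (G : SimpleGraph V) {S : Finset V} {k : ℕ}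
    (hS : 2 ^ k ≤ #S) : G.CliqueIndepAtLeast S (k + 2) := by
  classical
  induction k generalizing G S with
  | zero =>
    obtain ⟨v, hv⟩ := card_pos.mp (by simpa using hS)
    exact CliqueIndepAtLeast.two_of_mem hv
  | succ k ih =>
    obtain ⟨v, hv⟩ := card_pos.mp (lt_of_lt_of_le (by positivity) hS)
    set nbrs := (S.erase v).filter (G.Adj v)
    set nonNbrs := (S.erase v).filter (¬G.Adj v ·)
    have hsplit : #nbrs + #nonNbrs = #S - 1 := by
      rw [card_filter_add_card_filter_not, card_erase_of_mem hv]
    have hsub {P : V → Prop} [DecidablePred P] : (S.erase v).filter P ⊆ S :=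
      (filter_subset _ _).trans (erase_subset _ _)
    rcases le_or_gt (2 ^ k) #nbrs with hN | hN
    · exact (ih G hN).insert_of_forall_adj hv hsub fun u hu => (mem_filter.mp hu).2
    · have hnonNbrs_adj : ∀ u ∈ nonNbrs, Gᶜ.Adj v u := fun u hu => by
        obtain ⟨hu, hnadj⟩ := mem_filter.mp hu
        exact (G.compl_adj v u).mpr ⟨(ne_of_mem_erase hu).symm, hnadj⟩
      have hM : 2 ^ k ≤ #nonNbrs := by rw [pow_succ] at hS; omega
      simpa using ((ih Gᶜ hM).insert_of_forall_adj hv hsub hnonNbrs_adj).compl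

end SimpleGraph

theorem Rprime_le_two_pow_general (n : ℕ) (G : SimpleGraph (Fin (2 ^ (n - 2)))) :
    ∃ A B : Finset (Fin (2 ^ (n - 2))), G.IsClique (A : Set (Fin (2 ^ (n - 2)))) ∧
      Gᶜ.IsClique (B : Set (Fin (2 ^ (n - 2)))) ∧ n ≤ A.card + B.card := by
  obtain ⟨A, -, B, -, hA, hB, hcard⟩ :=
    G.cliqueIndepAtLeast_of_two_pow_le_card (S := univ) (k := n - 2) (by simp)
  exact ⟨A, B, hA, hB, by omega⟩

/-- `R'(n) ≤ 2^(n-2)`: every graph on `2^(n-2)` vertices (for `n ≥ 2`) contains a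
clique `A` and an independent set `B` (not necessarily disjoint) with `|A| + |B| ≥ n`. -/
theorem Rprime_le_two_pow (n : ℕ) (hn : 2 ≤ n) (G : SimpleGraph (Fin (2 ^ (n - 2)))) :
    ∃ A B : Finset (Fin (2 ^ (n - 2))), G.IsClique (A : Set (Fin (2 ^ (n - 2)))) ∧
      Gᶜ.IsClique (B : Set (Fin (2 ^ (n - 2)))) ∧ n ≤ A.card + B.card :=
  Rprime_le_two_pow_general n G
end

section
/- R'(5) = 6: every simple graph on 6 vertices contains a clique A and an independent set B with |A| + |B| ≥ 5, and the 5-cycle contains no such pair with |A| + |B| ≥ 5. -/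
/-!
A vertex of a graph on at least six vertices has three neighbours or three non-neighbours. In a
triangle-free graph the neighbours of a vertex are independent, so every graph on six vertices
contains a triangle or an independent triple (`R(3, 3) ≤ 6`). A triangle together with a non-edge,
or an independent triple together with an edge, gives `|A| + |B| = 5`; a graph without non-edges
(or without edges) is itself a clique (or independent set) of size six. The 5-cycle has neither
triangles nor independent triples, so in it `|A|, |B| ≤ 2`.
-/

def cycleFive : SimpleGraph (Fin 5) := SimpleGraph.fromRel (fun a b => b = a + 1)

open Finset

namespace SimpleGraph

variable {V : Type*} {G : SimpleGraph V}

/-- `R'(n)` is the least `N` such that every graph on `N` vertices has this property. -/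
def HasCliqueIndepPair (G : SimpleGraph V) (n : ℕ) : Prop :=
  ∃ A B : Finset V, G.IsClique (A : Set V) ∧ Gᶜ.IsClique (B : Set V) ∧ n ≤ #A + #B

theorem HasCliqueIndepPair.compl {n : ℕ} (h : G.HasCliqueIndepPair n) :
    Gᶜ.HasCliqueIndepPair n := by
  obtain ⟨A, B, hA, hB, hAB⟩ := h
  exact ⟨B, A, hB, by rwa [compl_compl], by omega⟩

theorem IsClique.card_lt_of_cliqueFree {n : ℕ} {s : Finset V} (hs : G.IsClique (s : Set V))
    (hG : G.CliqueFree n) : #s < n := by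
  by_contra! h
  obtain ⟨t, hts, rfl⟩ := exists_subset_card_eq h
  exact hG t ⟨hs.subset (by simpa), rfl⟩

theorem not_hasCliqueIndepPair_of_cliqueFree {m n : ℕ} (hG : G.CliqueFree (m + 1))
    (hGc : Gᶜ.CliqueFree (n + 1)) : ¬ G.HasCliqueIndepPair (m + n + 1) := by
  rintro ⟨A, B, hA, hB, hAB⟩
  have hAm := hA.card_lt_of_cliqueFree hG
  have hBn := hB.card_lt_of_cliqueFree hGc
  omega

theorem hasCliqueIndepPair_add_two {n : ℕ} {t : Finset V} (ht : G.IsNClique n t) (hG : G ≠ ⊤) :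
    G.HasCliqueIndepPair (n + 2) := by
  classical
  obtain ⟨a, b, hab, hnadj⟩ := ne_top_iff_exists_not_adj.1 hG
  refine ⟨t, {a, b}, ht.isClique, ?_, ?_⟩
  · rw [coe_pair]
    exact isClique_pair.2 fun _ => ⟨hab, hnadj⟩
  · rw [ht.card_eq, card_pair hab]

theorem not_cliqueFree_compl_of_three_le_degree {v : V} [Fintype (G.neighborSet v)]
    (hG : G.CliqueFree 3) (hv : 3 ≤ G.degree v) : ¬ Gᶜ.CliqueFree 3 := fun hGc => by
  have hclique : Gᶜ.IsClique (G.neighborFinset v : Set V) := by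
    simpa using G.isIndepSet_neighborSet_of_triangleFree hG v
  exact (hclique.card_lt_of_cliqueFree hGc).not_ge hv

theorem not_cliqueFree_three_or_compl [Fintype V] (hV : 6 ≤ Fintype.card V)
    (G : SimpleGraph V) : ¬ G.CliqueFree 3 ∨ ¬ Gᶜ.CliqueFree 3 := by
  classical
  by_contra! ⟨hG, hGc⟩
  obtain ⟨v⟩ : Nonempty V := Fintype.card_pos_iff.1 (by omega)
  have hdeg := G.degree_compl v
  rcases le_or_gt 3 (G.degree v) with h | h
  · exact not_cliqueFree_compl_of_three_le_degree hG h hGc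
  · exact not_cliqueFree_compl_of_three_le_degree (v := v) hGc (by omega) (by rwa [compl_compl])

theorem hasCliqueIndepPair_five_of_six_le_card [Fintype V] (hV : 6 ≤ Fintype.card V)
    (G : SimpleGraph V) : G.HasCliqueIndepPair 5 := by
  by_cases hG : G = ⊤
  · exact ⟨univ, ∅, by simp [hG], by simp, by rw [card_univ, card_empty]; omega⟩
  by_cases hGc : Gᶜ = ⊤
  · exact ⟨∅, univ, by simp, by simp [hGc], by rw [card_empty, card_univ]; omega⟩
  rcases not_cliqueFree_three_or_compl hV G with h | h <;>
    obtain ⟨t, ht⟩ := not_forall_not.1 h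
  · exact hasCliqueIndepPair_add_two ht hG
  · simpa using (hasCliqueIndepPair_add_two ht hGc).compl

end SimpleGraph

open SimpleGraph

instance : DecidableRel cycleFive.Adj := fun a b =>
  decidable_of_iff _ (fromRel_adj _ a b).symm

theorem cycleFive_cliqueFree_three : cycleFive.CliqueFree 3 := by
  rw [← cliqueFinset_eq_empty_iff]
  decide

theorem cycleFive_compl_cliqueFree_three : cycleFiveᶜ.CliqueFree 3 := by
  rw [← cliqueFinset_eq_empty_iff]
  decide

/-- `R'(5) = 6`: every graph on 6 vertices has a clique `A` and an independent set `B`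
with `|A| + |B| ≥ 5`, and the 5-cycle has no such pair. -/
theorem Rprime_five_eq_six :
    (∀ G : SimpleGraph (Fin 6), ∃ A B : Finset (Fin 6),
      G.IsClique (A : Set (Fin 6)) ∧ Gᶜ.IsClique (B : Set (Fin 6)) ∧ 5 ≤ A.card + B.card) ∧
    (¬ ∃ A B : Finset (Fin 5),
      cycleFive.IsClique (A : Set (Fin 5)) ∧ cycleFiveᶜ.IsClique (B : Set (Fin 5)) ∧
      5 ≤ A.card + B.card) :=
  ⟨hasCliqueIndepPair_five_of_six_le_card (by simp),
    not_hasCliqueIndepPair_of_cliqueFree (m := 2) (n := 2) cycleFive_cliqueFree_three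
      cycleFive_compl_cliqueFree_three⟩
end

section
/- For m, n ≥ 2, R_m(n) ≤ 1 + (m^(mn-2m+1) - 1)/(m-1): every m-colouring of the edges of a complete graph on 1 + (m^(mn-2m+1)-1)/(m-1) vertices contains a monochromatic clique of size n. -/
/-!
If a vertex set has more than `1 + m g` vertices, pick any `v`: by pigeonhole more than `g` of
the others are joined to `v` in a single colour `i`, and a clique of colour `i` among them extends
by `v`. Tracking a separate target size for each colour, this gives the off-diagonal bound
`R(b₁ + 2, …, b_m + 2) ≤ 1 + (1 + m + ⋯ + m^(b₁ + ⋯ + b_m))` by induction on `b₁ + ⋯ + b_m`;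
the theorem is the diagonal case `bᵢ = n - 2`.
-/

open Finset

/-- `A` spans a complete subgraph all of whose edges have colour `i` under the
edge-colouring `c` of the complete graph. -/
def MonoClique {V : Type*} {m : ℕ} (c : Sym2 V → Fin m) (i : Fin m) (A : Finset V) : Prop :=
  ∀ a ∈ A, ∀ b ∈ A, a ≠ b → c s(a, b) = i

section

variable {V : Type*} {m : ℕ} {c : Sym2 V → Fin m} {i : Fin m}

theorem monoClique_singleton (v : V) : MonoClique c i {v} := by
  intro a ha b hb hab
  simp_all

theorem MonoClique.insert [DecidableEq V] {A : Finset V} {v : V} (hA : MonoClique c i A)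
    (hv : ∀ a ∈ A, c s(v, a) = i) : MonoClique c i (insert v A) := by
  intro a ha b hb hab
  rcases mem_insert.mp ha with rfl | haA <;> rcases mem_insert.mp hb with rfl | hbA
  · exact absurd rfl hab
  · exact hv b hbA
  · rw [Sym2.eq_swap]; exact hv a haA
  · exact hA a haA b hbA hab

theorem exists_lt_card_colourNeighbourhood [DecidableEq V] {S : Finset V} {k : ℕ}
    (hS : ∑ j ∈ range (k + 1), m ^ j < #S) :
    ∃ v ∈ S, ∃ i, ∑ j ∈ range k, m ^ j < #{w ∈ S.erase v | c s(v, w) = i} := by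
  rw [geom_sum_succ] at hS
  obtain ⟨v, hv⟩ : S.Nonempty := card_pos.mp (by omega)
  have hcard : #(univ : Finset (Fin m)) * ∑ j ∈ range k, m ^ j < #(S.erase v) := by
    rw [card_erase_of_mem hv, card_univ, Fintype.card_fin]
    omega
  obtain ⟨i, -, hi⟩ := exists_lt_card_fiber_of_mul_lt_card_of_maps_to
    (fun w _ => mem_univ (c s(v, w))) hcard
  exact ⟨v, hv, i, hi⟩

theorem exists_monoClique_of_geomSum_lt_card (c : Sym2 V → Fin m) (b : Fin m → ℕ) (S : Finset V)
    (hS : ∑ j ∈ range (∑ i, b i + 1), m ^ j < #S) :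
    ∃ i, ∃ A ⊆ S, #A = b i + 2 ∧ MonoClique c i A := by
  classical
  induction hk : ∑ i, b i using Nat.strong_induction_on generalizing b S with
  | _ k ih =>
    rw [hk] at hS
    obtain ⟨v, hv, i, hT⟩ := exists_lt_card_colourNeighbourhood hS
    set T := {w ∈ S.erase v | c s(v, w) = i}
    have hTS : T ⊆ S := (filter_subset _ _).trans (erase_subset v S)
    have hvT : v ∉ T := fun h => (mem_erase.mp (mem_filter.mp h).1).1 rfl
    have hcolT : ∀ w ∈ T, c s(v, w) = i := fun w hw => (mem_filter.mp hw).2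
    rcases Nat.eq_zero_or_pos (b i) with hbi | hbi
    · obtain ⟨w, hw⟩ : T.Nonempty := card_pos.mp (by omega)
      refine ⟨i, {v, w}, insert_subset hv (singleton_subset_iff.mpr (hTS hw)), ?_,
        (monoClique_singleton w).insert (by simpa using hcolT w hw)⟩
      rw [card_pair (by rintro rfl; exact hvT hw), hbi]
    · set b' := Function.update b i (b i - 1)
      have hsum : ∑ j, b' j + 1 = k := by
        rw [sum_update_of_mem (mem_univ i), ← hk,
          sum_eq_add_sum_sdiff_singleton_of_mem (mem_univ i)]
        omega
      obtain ⟨j, A, hAT, hA, hmono⟩ := ih _ (by omega) b' T (by rwa [hsum]) rfl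
      by_cases hji : j = i
      · subst hji
        refine ⟨j, insert v A, insert_subset hv (hAT.trans hTS), ?_,
          hmono.insert fun a ha => hcolT a (hAT ha)⟩
        have hb'j : b' j = b j - 1 := Function.update_self ..
        rw [card_insert_of_notMem (fun h => hvT (hAT h)), hA, hb'j]
        omega
      · have hb'j : b' j = b j := Function.update_of_ne hji ..
        exact ⟨j, A, hAT.trans hTS, hb'j ▸ hA, hmono⟩

end

/-- Theorem: for `m, n ≥ 2`, every `m`-colouring of the edges of a complete graph on at
least `1 + (m^(mn-2m+1) - 1)/(m-1)` vertices contains a monochromatic clique of size `n`. -/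
theorem multicolour_ramsey_bound (m n : ℕ) (hm : 2 ≤ m) (hn : 2 ≤ n) (N : ℕ)
    (hN : 1 + (m ^ (m * n - 2 * m + 1) - 1) / (m - 1) ≤ N) (c : Sym2 (Fin N) → Fin m) :
    ∃ (i : Fin m) (A : Finset (Fin N)), A.card = n ∧ MonoClique c i A := by
  have hsum : ∑ _i : Fin m, (n - 2) + 1 = m * n - 2 * m + 1 := by
    rw [sum_const, card_univ, Fintype.card_fin, smul_eq_mul, Nat.mul_sub]
    ring_nf
  have hcard : ∑ j ∈ range (∑ _i : Fin m, (n - 2) + 1), m ^ j < #(univ : Finset (Fin N)) := by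
    rw [hsum, Nat.geomSum_eq hm, card_univ, Fintype.card_fin]
    omega
  obtain ⟨i, A, -, hA, hmono⟩ := exists_monoClique_of_geomSum_lt_card c _ _ hcard
  exact ⟨i, A, by omega, hmono⟩
end
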